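/- arXiv:2003.10550 — 3 statements merged into one kernel-verified Lean document; each statement's English description precedes it below -/
import Mathlib

section
/- Let X be a set, let f, μ, σ : X → ℝ be functions, and let β ≥ 0. Suppose |f(x) − μ(x)| ≤ √β · σ(x) for all x ∈ X, and suppose x_t ∈ X maximizes the upper confidence bound, i.e., μ(x) + √β·σ(x) ≤ μ(x_t) + √β·σ(x_t) for all x ∈ X. Then for every x* ∈ X, the instantaneous regret satisfies f(x*) − f(x_t) ≤ 2·√β·σ(x_t). -/
theorem ucb_regret_le_two_mul_width {X : Type*} (f μ w : X → ℝ)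
    (hconf : ∀ x, |f x - μ x| ≤ w x) (xt : X) (hucb : ∀ x, μ x + w x ≤ μ xt + w xt)
    (xstar : X) :
    f xstar - f xt ≤ 2 * w xt := by
  have optimism : f xstar ≤ μ xt + w xt := by
    linarith [le_abs_self (f xstar - μ xstar), hconf xstar, hucb xstar]
  have pessimism : μ xt - w xt ≤ f xt := by
    linarith [neg_abs_le (f xt - μ xt), hconf xt]
  linarith

theorem ucb_instantaneous_regret_general
    {X : Type*} (f μ σ : X → ℝ) (β : ℝ)
    (hconf : ∀ x : X, |f x - μ x| ≤ Real.sqrt β * σ x)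
    (xt : X)
    (hucb : ∀ x : X, μ x + Real.sqrt β * σ x ≤ μ xt + Real.sqrt β * σ xt)
    (xstar : X) :
    f xstar - f xt ≤ 2 * Real.sqrt β * σ xt := by
  rw [mul_assoc]
  exact ucb_regret_le_two_mul_width f μ (fun x => Real.sqrt β * σ x) hconf xt hucb xstar

/-- Lemma 2 (deterministic content): under the confidence event
`|f x − μ x| ≤ √β · σ x` for all `x`, the UCB maximizer `x_t` has
instantaneous regret at most `2 √β σ(x_t)` against any `x*`. -/
theorem ucb_instantaneous_regret
    {X : Type*} (f μ σ : X → ℝ) (β : ℝ) (hβ : 0 ≤ β)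
    (hconf : ∀ x : X, |f x - μ x| ≤ Real.sqrt β * σ x)
    (xt : X)
    (hucb : ∀ x : X, μ x + Real.sqrt β * σ x ≤ μ xt + Real.sqrt β * σ xt)
    (xstar : X) :
    f xstar - f xt ≤ 2 * Real.sqrt β * σ xt :=
  ucb_instantaneous_regret_general f μ σ β hconf xt hucb xstar
end

section
/- Let σ > 0, β ≥ 0, let M be a finite index set, and let r, s : M → ℝ satisfy 0 ≤ r(t) ≤ 2·√β·s(t) and 0 ≤ s(t) ≤ 1 for all t ∈ M. Define the information gain I = (1/2)·∑_{t∈M} log(1 + σ^{−2}·s(t)²) and the constant C₁ = 8/log(1 + σ^{−2}). Then ∑_{t∈M} r(t) ≤ √( C₁ · |M| · β · I ). -/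
/-!
Bounding each `r t` by `2 √β s t` and applying Cauchy–Schwarz gives
`∑ r ≤ 2 √β √(|M| ∑ s²)`. Since `u ↦ log (1 + c u)` is concave and vanishes at `0`, it lies above
its chord on `[0, 1]`, i.e. `u log (1 + c) ≤ log (1 + c u)`; with `u = s²` this bounds `∑ s²` by
`(∑ log (1 + c s²)) / log (1 + c)`, which is `C₁ I / 4`.
-/

open Real Finset

lemma mul_log_one_add_le_log_one_add_mul {c u : ℝ} (hc : -1 < c) (hu₀ : 0 ≤ u) (hu₁ : u ≤ 1) :
    u * log (1 + c) ≤ log (1 + c * u) := by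
  have hc' : 0 < 1 + c := by linarith
  calc u * log (1 + c) = log ((1 + c) ^ u) := (log_rpow hc' u).symm
    _ ≤ log (1 + u * c) := log_le_log (rpow_pos_of_pos hc' u)
          (rpow_one_add_le_one_add_mul_self hc.le hu₀ hu₁)
    _ = log (1 + c * u) := by rw [mul_comm]

lemma sum_le_sqrt_card_mul_sum_sq {ι : Type*} (M : Finset ι) (f : ι → ℝ) :
    ∑ t ∈ M, f t ≤ √(#M * ∑ t ∈ M, f t ^ 2) :=
  (le_abs_self _).trans (abs_le_sqrt sq_sum_le_card_mul_sum_sq)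

lemma sum_sq_le_sum_log_one_add_mul_sq_div {ι : Type*} {c : ℝ} (hc : 0 < c) (M : Finset ι)
    (s : ι → ℝ) (hs : ∀ t ∈ M, s t ^ 2 ≤ 1) :
    ∑ t ∈ M, s t ^ 2 ≤ (∑ t ∈ M, log (1 + c * s t ^ 2)) / log (1 + c) := by
  rw [le_div_iff₀ (log_pos (by linarith)), sum_mul]
  exact sum_le_sum fun t ht =>
    mul_log_one_add_le_log_one_add_mul (by linarith) (sq_nonneg _) (hs t ht)

theorem compressed_regret_info_gain_bound_general
    {ι : Type*} (σ β : ℝ) (hσ : 0 < σ)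
    (M : Finset ι) (r s : ι → ℝ)
    (hr : ∀ t ∈ M, 0 ≤ r t ∧ r t ≤ 2 * Real.sqrt β * s t)
    (hs : ∀ t ∈ M, 0 ≤ s t ∧ s t ≤ 1) :
    ∑ t ∈ M, r t ≤
      Real.sqrt ((8 / Real.log (1 + σ⁻¹ ^ 2)) * M.card * β *
        ((1 / 2) * ∑ t ∈ M, Real.log (1 + σ⁻¹ ^ 2 * (s t) ^ 2))) := by
  set c := σ⁻¹ ^ 2
  have hc : 0 < c := by positivity
  have hs_sq : ∀ t ∈ M, s t ^ 2 ≤ 1 := fun t ht => pow_le_one₀ (hs t ht).1 (hs t ht).2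
  have hgain : 0 ≤ (∑ t ∈ M, log (1 + c * s t ^ 2)) / log (1 + c) :=
    (sum_nonneg fun t _ => sq_nonneg (s t)).trans
      (sum_sq_le_sum_log_one_add_mul_sq_div hc M s hs_sq)
  calc ∑ t ∈ M, r t ≤ ∑ t ∈ M, 2 * √β * s t := sum_le_sum fun t ht => (hr t ht).2
    _ = 2 * √β * ∑ t ∈ M, s t := (mul_sum ..).symm
    _ ≤ 2 * √β * √(#M * ∑ t ∈ M, s t ^ 2) := by gcongr; exact sum_le_sqrt_card_mul_sum_sq M s
    _ ≤ 2 * √β * √(#M * ((∑ t ∈ M, log (1 + c * s t ^ 2)) / log (1 + c))) := by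
        gcongr; exact sum_sq_le_sum_log_one_add_mul_sq_div hc M s hs_sq
    _ = √(2 ^ 2 * (β * (#M * ((∑ t ∈ M, log (1 + c * s t ^ 2)) / log (1 + c))))) := by
        rw [sqrt_mul (sq_nonneg 2), sqrt_sq zero_le_two, sqrt_mul' β (by positivity), mul_assoc]
    _ = _ := by
        have hL : log (1 + c) ≠ 0 := (log_pos (by linarith)).ne'
        congr 1
        field_simp
        ring

/-- Lemma 4 combined with Cauchy–Schwarz (core of Theorem 1(i)): the compressed
regret is bounded by `√(C₁ · |M| · β · I)` where `I` is the information gain. -/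
theorem compressed_regret_info_gain_bound
    {ι : Type*} (σ β : ℝ) (hσ : 0 < σ) (hβ : 0 ≤ β)
    (M : Finset ι) (r s : ι → ℝ)
    (hr : ∀ t ∈ M, 0 ≤ r t ∧ r t ≤ 2 * Real.sqrt β * s t)
    (hs : ∀ t ∈ M, 0 ≤ s t ∧ s t ≤ 1) :
    ∑ t ∈ M, r t ≤
      Real.sqrt ((8 / Real.log (1 + σ⁻¹ ^ 2)) * M.card * β *
        ((1 / 2) * ∑ t ∈ M, Real.log (1 + σ⁻¹ ^ 2 * (s t) ^ 2))) :=
  compressed_regret_info_gain_bound_general σ β hσ M r s hr hs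
end

section
/- Let φ(z) = (2π)^{−1/2} exp(−z²/2) be the standard Gaussian density, Φ(z) = ∫_{−∞}^z φ(u) du the standard Gaussian distribution function, and τ(z) = z·Φ(z) + φ(z). Let f, μ, ξ ∈ ℝ, σ > 0 and β ≥ 0 satisfy |f − μ| ≤ √β·σ. Then max(f − ξ, 0) − √β·σ ≤ σ·τ( (μ − ξ)/σ ) = σ·φ(z) + (μ − ξ)·Φ(z), where z = (μ − ξ)/σ. -/
/-!
Since `φ' = -u φ`, the first moments of `φ` over half-lines are `±φ(z)`, so
`τ(z) = ∫_{u ≤ z} (z - u) φ(u) du = z + ∫_{u > z} (u - z) φ(u) du`.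
Both integrands are nonnegative, hence `τ(z) ≥ max(z, 0)` and `σ τ(z) ≥ max(μ - ξ, 0)`;
the confidence bound gives `f - ξ ≤ (μ - ξ) + √β σ`.
-/

open MeasureTheory Real Set Filter Topology ProbabilityTheory

/-- Standard Gaussian density `φ(z) = (2π)^{−1/2} exp(−z²/2)`. -/
noncomputable def stdGaussianPDF (z : ℝ) : ℝ :=
  (Real.sqrt (2 * Real.pi))⁻¹ * Real.exp (-z ^ 2 / 2)

/-- Standard Gaussian distribution function `Φ(z) = ∫_{−∞}^z φ(u) du`. -/
noncomputable def stdGaussianCDF (z : ℝ) : ℝ :=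
  ∫ u in Set.Iic z, stdGaussianPDF u

/-- `τ(z) = z Φ(z) + φ(z)`. -/
noncomputable def tauEI (z : ℝ) : ℝ := z * stdGaussianCDF z + stdGaussianPDF z

lemma stdGaussianPDF_eq_gaussianPDFReal : stdGaussianPDF = gaussianPDFReal 0 1 := by
  ext z
  simp [stdGaussianPDF, gaussianPDFReal]

lemma stdGaussianPDF_nonneg (z : ℝ) : 0 ≤ stdGaussianPDF z := by
  unfold stdGaussianPDF
  positivity

lemma integrable_stdGaussianPDF : Integrable stdGaussianPDF :=
  stdGaussianPDF_eq_gaussianPDFReal ▸ integrable_gaussianPDFReal 0 1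

lemma integral_stdGaussianPDF : ∫ u, stdGaussianPDF u = 1 :=
  stdGaussianPDF_eq_gaussianPDFReal ▸ integral_gaussianPDFReal_eq_one 0 one_ne_zero

lemma integrable_mul_stdGaussianPDF : Integrable fun u => u * stdGaussianPDF u := by
  refine ((integrable_mul_exp_neg_mul_sq one_half_pos).const_mul (√(2 * π))⁻¹).congr
    (ae_of_all _ fun u => ?_)
  simp only [stdGaussianPDF]
  ring_nf

lemma hasDerivAt_neg_stdGaussianPDF (u : ℝ) :
    HasDerivAt (fun x => -stdGaussianPDF x) (u * stdGaussianPDF u) u := by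
  have hexp : HasDerivAt (fun x : ℝ => rexp (-x ^ 2 / 2)) (rexp (-u ^ 2 / 2) * -u) u := by
    simpa [neg_div] using ((hasDerivAt_pow 2 u).div_const 2).neg.exp
  refine (hexp.const_mul (√(2 * π))⁻¹).neg.congr_deriv ?_
  simp only [stdGaussianPDF]
  ring

lemma tendsto_stdGaussianPDF_cocompact : Tendsto stdGaussianPDF (cocompact ℝ) (𝓝 0) := by
  have := (tendsto_rpow_abs_mul_exp_neg_mul_sq_cocompact one_half_pos 0).const_mul
    (√(2 * π))⁻¹
  rw [mul_zero] at this
  refine this.congr fun u => ?_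
  simp only [stdGaussianPDF, rpow_zero, one_mul]
  ring_nf

lemma integral_Iic_mul_stdGaussianPDF (z : ℝ) :
    ∫ u in Iic z, u * stdGaussianPDF u = -stdGaussianPDF z := by
  have h := integral_Iic_of_hasDerivAt_of_tendsto' (f := fun u => -stdGaussianPDF u) (a := z)
    (fun u _ => hasDerivAt_neg_stdGaussianPDF u)
    integrable_mul_stdGaussianPDF.integrableOn
    (by simpa using (tendsto_stdGaussianPDF_cocompact.mono_left atBot_le_cocompact).neg)
  simpa using h

lemma integral_Ioi_mul_stdGaussianPDF (z : ℝ) :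
    ∫ u in Ioi z, u * stdGaussianPDF u = stdGaussianPDF z := by
  have h := integral_Ioi_of_hasDerivAt_of_tendsto' (f := fun u => -stdGaussianPDF u) (a := z)
    (fun u _ => hasDerivAt_neg_stdGaussianPDF u)
    integrable_mul_stdGaussianPDF.integrableOn
    (by simpa using (tendsto_stdGaussianPDF_cocompact.mono_left atTop_le_cocompact).neg)
  simpa using h

lemma integral_Ioi_stdGaussianPDF (z : ℝ) :
    ∫ u in Ioi z, stdGaussianPDF u = 1 - stdGaussianCDF z := by
  rw [← integral_stdGaussianPDF, ← integral_add_compl measurableSet_Iic integrable_stdGaussianPDF,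
    compl_Iic, stdGaussianCDF, add_sub_cancel_left]

lemma tauEI_eq_integral_Iic (z : ℝ) :
    tauEI z = ∫ u in Iic z, (z - u) * stdGaussianPDF u := by
  simp only [sub_mul]
  rw [integral_sub (integrable_stdGaussianPDF.const_mul z).integrableOn
    integrable_mul_stdGaussianPDF.integrableOn, integral_const_mul,
    integral_Iic_mul_stdGaussianPDF, tauEI, stdGaussianCDF, sub_neg_eq_add]

lemma tauEI_eq_add_integral_Ioi (z : ℝ) :
    tauEI z = z + ∫ u in Ioi z, (u - z) * stdGaussianPDF u := by
  simp only [sub_mul]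
  rw [integral_sub integrable_mul_stdGaussianPDF.integrableOn
    (integrable_stdGaussianPDF.const_mul z).integrableOn, integral_const_mul,
    integral_Ioi_mul_stdGaussianPDF, integral_Ioi_stdGaussianPDF, tauEI]
  ring

lemma tauEI_nonneg (z : ℝ) : 0 ≤ tauEI z := by
  rw [tauEI_eq_integral_Iic]
  exact setIntegral_nonneg measurableSet_Iic fun u hu =>
    mul_nonneg (sub_nonneg.2 hu) (stdGaussianPDF_nonneg u)

lemma le_tauEI (z : ℝ) : z ≤ tauEI z := by
  rw [tauEI_eq_add_integral_Ioi, le_add_iff_nonneg_right]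
  exact setIntegral_nonneg measurableSet_Ioi fun u hu =>
    mul_nonneg (sub_nonneg.2 hu.le) (stdGaussianPDF_nonneg u)

theorem instantaneous_improvement_le_expected_improvement_general
    (f μ ξ σ β : ℝ) (hσ : 0 < σ)
    (hconf : |f - μ| ≤ Real.sqrt β * σ) :
    max (f - ξ) 0 - Real.sqrt β * σ ≤ σ * tauEI ((μ - ξ) / σ) ∧
    σ * tauEI ((μ - ξ) / σ) =
      σ * stdGaussianPDF ((μ - ξ) / σ) + (μ - ξ) * stdGaussianCDF ((μ - ξ) / σ) := by
  set z := (μ - ξ) / σ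
  have hσz : σ * z = μ - ξ := mul_div_cancel₀ _ hσ.ne'
  refine ⟨?_, by rw [tauEI, mul_add, ← mul_assoc, hσz, add_comm]⟩
  have hτ_nonneg : 0 ≤ σ * tauEI z := mul_nonneg hσ.le (tauEI_nonneg z)
  have hτ_ge : μ - ξ ≤ σ * tauEI z := hσz ▸ mul_le_mul_of_nonneg_left (le_tauEI z) hσ.le
  have hfμ := abs_le.1 hconf
  rw [sub_le_iff_le_add, max_le_iff]
  constructor <;> linarith

/-- Lemma 7 (deterministic content): on the confidence event `|f − μ| ≤ √β σ`,
the instantaneous improvement `max(f − ξ, 0)` minus `√β σ` is bounded above by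
the expected improvement `σ τ((μ − ξ)/σ) = σ φ(z) + (μ − ξ) Φ(z)`. -/
theorem instantaneous_improvement_le_expected_improvement
    (f μ ξ σ β : ℝ) (hσ : 0 < σ) (hβ : 0 ≤ β)
    (hconf : |f - μ| ≤ Real.sqrt β * σ) :
    max (f - ξ) 0 - Real.sqrt β * σ ≤ σ * tauEI ((μ - ξ) / σ) ∧
    σ * tauEI ((μ - ξ) / σ) =
      σ * stdGaussianPDF ((μ - ξ) / σ) + (μ - ξ) * stdGaussianCDF ((μ - ξ) / σ) :=
  instantaneous_improvement_le_expected_improvement_general f μ ξ σ β hσ hconf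
end
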